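/- There exist a measurable space, a probability measure P, a bounded lower-unbounded-failing penalty function α, and a random variable X_k such that ρ̂^P(X_k) ≤ 0 but ρ^P(X_k) > 0; i.e., the acceptance set C^P is strictly contained in Ĉ^P. Concretely, on ([0,1], B([0,1])) with P the Lebesgue measure and α(Q) = 0 if Q ≪ P and α(Q) = −1 otherwise, the constant random variable X_k = k (P-a.s.) with k ∈ (0,1) satisfies ρ̂^P(X_k) = −k < 0 while ρ^P(X_k) ≥ 1 − k > 0. -/
import Mathlib


open MeasureTheory Set Classical

/-- Bounded measurable `P`-versions of `X`. -/
def versions {Ω : Type*} [MeasurableSpace Ω] (P : Measure Ω) (X : Ω → ℝ) : Set (Ω → ℝ) :=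
  {Y | Measurable Y ∧ (∃ K : ℝ, ∀ ω, |Y ω| ≤ K) ∧ ∀ᵐ ω ∂P, Y ω = X ω}

/-- `E_Q[-Y]` as an extended real. -/
noncomputable def negExp {Ω : Type*} [MeasurableSpace Ω] (Q : Measure Ω) (Y : Ω → ℝ) :
    EReal := ((∫ ω, -Y ω ∂Q : ℝ) : EReal)

/-- On `([0,1], Borel)` with `P` the Lebesgue measure and the penalty
`α(Q) = 0` if `Q ≪ P`, `α(Q) = −1` otherwise, the constant claim `X_k ≡ k`, `k ∈ (0,1)`,
satisfies `ρ̂^P(X_k) = −k < 0` while `ρ^P(X_k) ≥ 1 − k > 0`; in particular the acceptance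
set `C^P` is strictly contained in `Ĉ^P`. -/
theorem stmt5 :
    ∃ (P : Measure ℝ) (_ : IsProbabilityMeasure P) (α : Measure ℝ → EReal),
      P = MeasureTheory.volume.restrict (Set.Icc (0:ℝ) 1) ∧
      (∀ Q : Measure ℝ, α Q = if Q ≪ P then (0 : EReal) else (-1 : EReal)) ∧
      ∀ k ∈ Set.Ioo (0:ℝ) 1,
        (⨆ Q : {Q : Measure ℝ // IsProbabilityMeasure Q ∧ Q ≪ P},
            (negExp Q.1 (fun _ => k) - α Q.1)) = ((-k : ℝ) : EReal) ∧
        ((-k : ℝ) : EReal) < 0 ∧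
        ((1 - k : ℝ) : EReal) ≤
          (⨅ Y ∈ versions P (fun _ => k),
            ⨆ Q : {Q : Measure ℝ // IsProbabilityMeasure Q}, (negExp Q.1 Y - α Q.1)) ∧
        (0 : EReal) < ((1 - k : ℝ) : EReal) := by
  set P : Measure ℝ := MeasureTheory.volume.restrict (Set.Icc (0:ℝ) 1) with hP
  have hPprob : IsProbabilityMeasure P := by
    constructor
    rw [hP, Measure.restrict_apply_univ, Real.volume_Icc]
    norm_num
  refine ⟨P, hPprob, fun Q => if Q ≪ P then (0 : EReal) else (-1 : EReal), rfl,
    fun Q => rfl, ?_⟩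
  intro k hk
  obtain ⟨hk0, hk1⟩ := hk
  refine ⟨?_, ?_, ?_, ?_⟩
  · -- sup over Q ≪ P
    have hne : Nonempty {Q : Measure ℝ // IsProbabilityMeasure Q ∧ Q ≪ P} :=
      ⟨⟨P, hPprob, Measure.AbsolutelyContinuous.refl P⟩⟩
    have hconst : ∀ Q : {Q : Measure ℝ // IsProbabilityMeasure Q ∧ Q ≪ P},
        (negExp Q.1 (fun _ => k) -
          (if Q.1 ≪ P then (0 : EReal) else (-1 : EReal))) = ((-k : ℝ) : EReal) := by
      rintro ⟨Q, hQprob, hQac⟩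
      simp only [hQac, if_pos]
      have : negExp Q (fun _ => k) = ((-k : ℝ) : EReal) := by
        unfold negExp
        have := hQprob
        simp [integral_const]
      rw [this, sub_zero]
    rw [iSup_congr hconst, iSup_const]
  · exact_mod_cast neg_neg_iff_pos.mpr hk0
  · -- inf over versions
    refine le_iInf₂ ?_
    rintro Y ⟨hYm, ⟨K, hK⟩, hYae⟩
    -- get a point where Y x = k
    obtain ⟨x, hx⟩ : ∃ x, Y x = k := hYae.exists
    have hPx : P {x} = 0 := by
      rw [hP, Measure.restrict_apply (measurableSet_singleton x)]
      exact measure_mono_null (Set.inter_subset_left) (Real.volume_singleton)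
    have hnac : ¬ Measure.dirac x ≪ P := by
      intro h
      have := h hPx
      rw [Measure.dirac_apply_of_mem (Set.mem_singleton x)] at this
      exact one_ne_zero this
    have hdprob : IsProbabilityMeasure (Measure.dirac x) := inferInstance
    refine le_trans ?_ (le_iSup _ (⟨Measure.dirac x, hdprob⟩ :
      {Q : Measure ℝ // IsProbabilityMeasure Q}))
    have hneg : negExp (Measure.dirac x) Y = ((-k : ℝ) : EReal) := by
      unfold negExp
      rw [integral_dirac (fun ω => -Y ω) x, hx]
    simp only [hneg, hnac, if_neg, not_false_iff]
    have : ((-k : ℝ) : EReal) - (-1 : EReal) = ((1 - k : ℝ) : EReal) := by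
      rw [show (-1 : EReal) = ((-1 : ℝ) : EReal) by norm_num, ← EReal.coe_sub]
      norm_num
      rw [sub_eq_add_neg, add_comm]
    rw [this]
  · exact_mod_cast sub_pos.mpr hk1
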